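/- arXiv:2401.10122 — 11 statements merged into one kernel-verified Lean document; each statement's English description precedes it below -/
import Mathlib

section
/- If a neutral randomized approval-based committee rule f satisfies ε-differential privacy, then for any profile P of n approval ballots, committee size k, and any two size-k committees W1, W2, the winning probability of W1 under f(P,k) is at most e^{nε} times the winning probability of W2. -/
open scoped Classical

noncomputable section

/-- A profile assigns to each of the `n` voters an approval ballot (a finite set of alternatives). -/
abbrev Profile (A : Type) (n : ℕ) := Fin n → Finset A

/-- Two profiles are neighboring if they differ in at most one voter's ballot. -/
def Neighboring {A : Type} {n : ℕ} (P P' : Profile A n) : Prop :=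
  ∃ i : Fin n, ∀ j : Fin n, j ≠ i → P j = P' j

/-- `W'` Pareto-dominates `W` in profile `P`. -/
def ParetoDom {A : Type} [DecidableEq A] {n : ℕ} (P : Profile A n) (W' W : Finset A) : Prop :=
  (∀ i, (W ∩ P i).card ≤ (W' ∩ P i).card) ∧ (∃ i, (W ∩ P i).card < (W' ∩ P i).card)

/-- The set of alternatives approved by every voter in `V`. -/
def commonApproved {A : Type} [Fintype A] {n : ℕ} (P : Profile A n) (V : Finset (Fin n)) :
    Finset A :=
  Finset.univ.filter (fun a => ∀ i ∈ V, a ∈ P i)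

/-- `V` is an `ℓ`-cohesive group for `(P, k)`: `|V| ≥ ℓ·n/k` and `|⋂_{i∈V} P i| ≥ ℓ`. -/
def Cohesive {A : Type} [Fintype A] {n : ℕ} (P : Profile A n) (k ℓ : ℕ)
    (V : Finset (Fin n)) : Prop :=
  ℓ * n ≤ V.card * k ∧ ℓ ≤ (commonApproved P V).card

/-- Committee `W` (of size `k`) satisfies justified representation for `(P, k)`. -/
def JRsat {A : Type} [Fintype A] [DecidableEq A] {n : ℕ} (P : Profile A n) (k : ℕ)
    (W : Finset A) : Prop :=
  W.card = k ∧ ∀ V : Finset (Fin n), Cohesive P k 1 V → ∃ i ∈ V, (P i ∩ W).Nonempty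

/-- Committee `W` satisfies proportional justified representation for `(P, k)`. -/
def PJRsat {A : Type} [Fintype A] [DecidableEq A] {n : ℕ} (P : Profile A n) (k : ℕ)
    (W : Finset A) : Prop :=
  W.card = k ∧ ∀ (ℓ : ℕ) (V : Finset (Fin n)), 1 ≤ ℓ → Cohesive P k ℓ V →
    ℓ ≤ (W ∩ V.biUnion P).card

/-- Committee `W` satisfies extended justified representation for `(P, k)`. -/
def EJRsat {A : Type} [Fintype A] [DecidableEq A] {n : ℕ} (P : Profile A n) (k : ℕ)
    (W : Finset A) : Prop :=
  W.card = k ∧ ∀ (ℓ : ℕ) (V : Finset (Fin n)), 1 ≤ ℓ → Cohesive P k ℓ V →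
    ∃ i ∈ V, ℓ ≤ (P i ∩ W).card

/-- `W` is a Condorcet committee for `(P, k)`: against every other size-`k` committee,
strictly more than half of the voters prefer `W`. -/
def CondorcetCommittee {A : Type} [Fintype A] [DecidableEq A] {n : ℕ} (P : Profile A n)
    (k : ℕ) (W : Finset A) : Prop :=
  W.card = k ∧ ∀ W' : Finset A, W'.card = k → W' ≠ W →
    n < 2 * (Finset.univ.filter
      (fun i : Fin n => (P i ∩ W').card < (P i ∩ W).card)).card

/-- A randomized approval-based committee (ABC) rule: for each profile and committee size `k`,
a probability distribution over the size-`k` committees. -/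
structure ABCRule (A : Type) [Fintype A] [DecidableEq A] (n : ℕ) where
  prob : Profile A n → ℕ → Finset A → ℝ
  nonneg : ∀ P k W, 0 ≤ prob P k W
  size_eq : ∀ P k W, prob P k W ≠ 0 → W.card = k
  sum_one : ∀ P k, k ≤ Fintype.card A →
    ∑ W ∈ Finset.univ.filter (fun W : Finset A => W.card = k), prob P k W = 1

variable {A : Type} [Fintype A] [DecidableEq A] {n : ℕ}

/-- ε-differential privacy at committee size `k`. -/
def DPAt (f : ABCRule A n) (k : ℕ) (ε : ℝ) : Prop :=
  ∀ (P P' : Profile A n) (W : Finset A),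
    Neighboring P P' → f.prob P k W ≤ Real.exp ε * f.prob P' k W

/-- ε-differential privacy: single-ballot changes alter each committee's winning
probability by a factor of at most `e^ε`. -/
def DP (f : ABCRule A n) (ε : ℝ) : Prop := ∀ k : ℕ, DPAt f k ε

/-- Neutrality: the rule commutes with permutations of the alternatives. -/
def Neutral (f : ABCRule A n) : Prop :=
  ∀ (σ : Equiv.Perm A) (P : Profile A n) (k : ℕ) (W : Finset A),
    f.prob (fun i => (P i).image σ) k (W.image σ) = f.prob P k W

/-- θ-JR: each JR committee wins with probability at least θ times that of each non-JR one. -/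
def ThetaJR (f : ABCRule A n) (θ : ℝ) : Prop :=
  ∀ (P : Profile A n) (k : ℕ) (W₁ W₂ : Finset A),
    JRsat P k W₁ → W₂.card = k → ¬ JRsat P k W₂ →
      θ * f.prob P k W₂ ≤ f.prob P k W₁

/-- ρ-PJR. -/
def RhoPJR (f : ABCRule A n) (ρ : ℝ) : Prop :=
  ∀ (P : Profile A n) (k : ℕ) (W₁ W₂ : Finset A),
    PJRsat P k W₁ → W₂.card = k → ¬ PJRsat P k W₂ →
      ρ * f.prob P k W₂ ≤ f.prob P k W₁

/-- κ-EJR. -/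
def KappaEJR (f : ABCRule A n) (κ : ℝ) : Prop :=
  ∀ (P : Profile A n) (k : ℕ) (W₁ W₂ : Finset A),
    EJRsat P k W₁ → W₂.card = k → ¬ EJRsat P k W₂ →
      κ * f.prob P k W₂ ≤ f.prob P k W₁

/-- Exact Condorcet criterion: whenever a Condorcet committee exists, it wins with
probability one. -/
def CondorcetCrit (f : ABCRule A n) : Prop :=
  ∀ (P : Profile A n) (k : ℕ) (W : Finset A),
    CondorcetCommittee P k W → f.prob P k W = 1

/-- η-Condorcet criterion. -/
def EtaCC (f : ABCRule A n) (η : ℝ) : Prop :=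
  ∀ (P : Profile A n) (k : ℕ) (Wc W : Finset A),
    CondorcetCommittee P k Wc → W.card = k → W ≠ Wc →
      η * f.prob P k W ≤ f.prob P k Wc

/-- Exact Pareto efficiency at committee size `k`: no committee in the support is
Pareto-dominated by another size-`k` committee. -/
def ParetoEffAt (f : ABCRule A n) (k : ℕ) : Prop :=
  ∀ (P : Profile A n) (W : Finset A), f.prob P k W ≠ 0 →
    ∀ W' : Finset A, W'.card = k → ¬ ParetoDom P W' W

/-- β-Pareto efficiency at committee size `k`. -/
def BetaPEAt (f : ABCRule A n) (k : ℕ) (β : ℝ) : Prop :=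
  ∀ (P : Profile A n) (W₁ W₂ : Finset A), W₁.card = k → W₂.card = k →
    ParetoDom P W₁ W₂ → β * f.prob P k W₂ ≤ f.prob P k W₁

/-- The approval voting score of a committee. -/
def AV (P : Profile A n) (W : Finset A) : ℕ := ∑ j, (P j ∩ W).card

/-- The set of size-`k` committees satisfying JR for `(P, k)`. -/
def JRset (P : Profile A n) (k : ℕ) : Finset (Finset A) :=
  Finset.univ.filter (fun W => JRsat P k W)

lemma exists_perm_image' {A : Type} [Fintype A] [DecidableEq A] (W₂ W₁ : Finset A)
    (h : W₂.card = W₁.card) : ∃ σ : Equiv.Perm A, W₂.image σ = W₁ := by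
  have e : {a // a ∈ W₂} ≃ {a // a ∈ W₁} := Fintype.equivOfCardEq (by simpa using h)
  have ec : {a // ¬ a ∈ W₂} ≃ {a // ¬ a ∈ W₁} := Fintype.equivOfCardEq (by
    rw [Fintype.card_subtype_compl, Fintype.card_subtype_compl]
    simp [h])
  set σ : Equiv.Perm A :=
    (Equiv.sumCompl (· ∈ W₂)).symm.trans ((e.sumCongr ec).trans (Equiv.sumCompl (· ∈ W₁)))
  refine ⟨σ, Finset.eq_of_subset_of_card_le ?_ ?_⟩
  · intro b hb
    rcases Finset.mem_image.1 hb with ⟨a, ha, rfl⟩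
    have : σ a = (e ⟨a, ha⟩ : A) := by
      simp [σ, Equiv.sumCompl_symm_apply_of_pos (p := (· ∈ W₂)) ha]
    rw [this]
    exact (e ⟨a, ha⟩).2
  · rw [Finset.card_image_of_injective _ σ.injective, h]

/-- A neutral ε-DP ABC rule gives any two size-k committees winning
probabilities within a factor of e^{nε} on any fixed profile. -/
theorem neutral_dp_prob_le (hA : 3 ≤ Fintype.card A) (f : ABCRule A n) (ε : ℝ)
    (hNeu : Neutral f) (hDP : DP f ε) :
    ∀ (P : Profile A n) (k : ℕ) (W₁ W₂ : Finset A), W₁.card = k → W₂.card = k →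
      f.prob P k W₁ ≤ Real.exp (n * ε) * f.prob P k W₂ := by
  intro P k W₁ W₂ h₁ h₂
  obtain ⟨σ, hσ⟩ := exists_perm_image' W₂ W₁ (h₂.trans h₁.symm)
  -- hybrid profiles
  set Q : ℕ → Profile A n := fun m i => if (i : ℕ) < m then (P i).image σ else P i with hQ
  have hchain : ∀ m ≤ n, f.prob P k W₁ ≤ Real.exp (m * ε) * f.prob (Q m) k W₁ := by
    intro m hm
    induction m with
    | zero =>
      have : Q 0 = P := by funext i; simp [hQ]
      simp [this]
    | succ m ih =>
      have hmn : m < n := hm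
      have hstep : Neighboring (Q m) (Q (m + 1)) := by
        refine ⟨⟨m, hmn⟩, fun j hj => ?_⟩
        have hjm : (j : ℕ) ≠ m := fun h => hj (Fin.ext h)
        have : (j : ℕ) < m ↔ (j : ℕ) < m + 1 := by omega
        simp [hQ, this]
      have hdp := hDP k (Q m) (Q (m + 1)) W₁ hstep
      calc f.prob P k W₁ ≤ Real.exp (m * ε) * f.prob (Q m) k W₁ := ih (le_of_lt hmn)
        _ ≤ Real.exp (m * ε) * (Real.exp ε * f.prob (Q (m + 1)) k W₁) := by
            exact mul_le_mul_of_nonneg_left hdp (Real.exp_nonneg _)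
        _ = Real.exp ((m + 1 : ℕ) * ε) * f.prob (Q (m + 1)) k W₁ := by
            rw [← mul_assoc, ← Real.exp_add]
            push_cast
            ring_nf
  have hQn : Q n = fun i => (P i).image σ := by
    funext i; simp [hQ, i.isLt]
  have hneu : f.prob (Q n) k W₁ = f.prob P k W₂ := by
    rw [hQn, ← hσ]
    exact hNeu σ P k W₂
  have := hchain n le_rfl
  rwa [hneu] at this
end
end

section
/- No randomized approval-based committee rule satisfying ε-DP for some ε > 0 satisfies (exact) Pareto efficiency, provided the number of alternatives m exceeds the committee size k. -/
open scoped Classical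

noncomputable section

variable {A : Type} [Fintype A] [DecidableEq A] {n : ℕ}

/-- No ε-DP (ε > 0) ABC rule satisfies exact Pareto efficiency,
provided the number of alternatives exceeds the committee size. -/
theorem dp_not_paretoEff (hA : 3 ≤ Fintype.card A) (hn : 0 < n)
    (f : ABCRule A n) (ε : ℝ) (hε : 0 < ε) (hDP : DP f ε)
    (k : ℕ) (hk : 0 < k) (hkm : k < Fintype.card A) :
    ¬ ParetoEffAt f k := by
  intro hPE
  -- a size-k subset S and a different size-k subset S'
  obtain ⟨S, hSsub, hScard⟩ := Finset.exists_subset_card_eq (s := (Finset.univ : Finset A))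
    (n := k) (by simpa using le_of_lt hkm)
  have hSssub : S ⊂ Finset.univ := by
    refine Finset.ssubset_univ_iff.mpr ?_
    intro h
    rw [h, Finset.card_univ] at hScard
    omega
  obtain ⟨a, _, ha⟩ := Finset.exists_of_ssubset hSssub
  obtain ⟨b, hb⟩ := Finset.card_pos.mp (hScard ▸ hk)
  set S' : Finset A := insert a (S.erase b) with hS'def
  have hS'card : S'.card = k := by
    rw [hS'def, Finset.card_insert_of_notMem (fun h => ha (Finset.mem_of_mem_erase h)),
      Finset.card_erase_of_mem hb, hScard]
    omega
  have hSS' : S' ≠ S := by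
    intro h
    exact ha (h ▸ Finset.mem_insert_self a _)
  -- key: on a constant profile with ballot T of size k, every other committee has prob 0
  have key : ∀ (T : Finset A), T.card = k → ∀ W : Finset A, W.card = k → W ≠ T →
      f.prob (fun _ => T) k W = 0 := by
    intro T hT W hW hne
    by_contra h
    refine hPE (fun _ => T) W h T hT ⟨?_, ?_⟩
    · intro i
      rw [Finset.inter_self]
      calc (W ∩ T).card ≤ W.card := Finset.card_le_card Finset.inter_subset_left
        _ = T.card := by rw [hW, hT]
    · refine ⟨⟨0, hn⟩, ?_⟩
      rw [Finset.inter_self]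
      refine Finset.card_lt_card ?_
      refine Finset.ssubset_iff_subset_ne.mpr ⟨Finset.inter_subset_right, ?_⟩
      intro hEq
      have hTW : T ⊆ W := by
        intro x hx
        have := hEq ▸ hx
        exact (Finset.mem_inter.mp this).1
      exact hne (Finset.eq_of_subset_of_card_le hTW (by rw [hW, hT])).symm
  -- the interpolating chain of profiles
  set Q : ℕ → Profile A n := fun t i => if (i : ℕ) < t then S' else S with hQdef
  have hQ0 : Q 0 = fun _ => S := by
    funext i; simp [hQdef]
  have hQn : Q n = fun _ => S' := by
    funext i; simp [hQdef, i.isLt]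
  have hneigh : ∀ t : ℕ, Neighboring (Q t) (Q (t + 1)) := by
    intro t
    by_cases ht : t < n
    · refine ⟨⟨t, ht⟩, ?_⟩
      intro j hj
      have hjt : (j : ℕ) ≠ t := fun h => hj (Fin.ext h)
      have : (j : ℕ) < t ↔ (j : ℕ) < t + 1 := by omega
      simp only [hQdef]
      by_cases h1 : (j : ℕ) < t
      · rw [if_pos h1, if_pos (this.mp h1)]
      · rw [if_neg h1, if_neg (fun h2 => h1 (this.mpr h2))]
    · refine ⟨⟨0, hn⟩, ?_⟩
      intro j _
      have h1 : (j : ℕ) < t := lt_of_lt_of_le j.isLt (le_of_not_gt ht)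
      simp only [hQdef]
      rw [if_pos h1, if_pos (by omega)]
  -- chain inequality
  have chain : ∀ t : ℕ, f.prob (Q 0) k S ≤ Real.exp ε ^ t * f.prob (Q t) k S := by
    intro t
    induction t with
    | zero => simp
    | succ t ih =>
      calc f.prob (Q 0) k S ≤ Real.exp ε ^ t * f.prob (Q t) k S := ih
        _ ≤ Real.exp ε ^ t * (Real.exp ε * f.prob (Q (t + 1)) k S) := by
            refine mul_le_mul_of_nonneg_left ?_ (pow_nonneg (le_of_lt (Real.exp_pos ε)) t)
            exact hDP k (Q t) (Q (t + 1)) S (hneigh t)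
        _ = Real.exp ε ^ (t + 1) * f.prob (Q (t + 1)) k S := by ring
  have hQnS : f.prob (Q n) k S = 0 := by
    rw [hQn]
    exact key S' hS'card S hScard (Ne.symm hSS')
  have hzero : f.prob (Q 0) k S = 0 := by
    have h1 := chain n
    rw [hQnS, mul_zero] at h1
    exact le_antisymm h1 (f.nonneg _ _ _)
  -- but the probabilities at Q 0 sum to 1, while each term is 0
  have hsum := f.sum_one (Q 0) k (le_of_lt hkm)
  have : (∑ W ∈ Finset.univ.filter (fun W : Finset A => W.card = k),
      f.prob (Q 0) k W) = 0 := by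
    refine Finset.sum_eq_zero ?_
    intro W hW
    have hWk : W.card = k := (Finset.mem_filter.mp hW).2
    by_cases hWS : W = S
    · rw [hWS]; exact hzero
    · rw [hQ0]; exact key S hScard W hWk hWS
  rw [hsum] at this
  exact one_ne_zero this
end
end

section
/- No randomized approval-based committee rule satisfying ε-DP for some ε > 0 satisfies the exact Condorcet criterion, provided there exist two distinct profiles with distinct Condorcet committees. -/
open scoped Classical

noncomputable section

variable {A : Type} [Fintype A] [DecidableEq A] {n : ℕ}

/-! A DP rule can never move a committee from positive probability to probability zero: along the
chain of profiles that switch the ballots from `P` to `P'` one voter at a time, each step scales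
the probability by at most `e^ε`. So a committee that wins surely at `P` keeps positive
probability at every other profile, and cannot be absent where a different Condorcet committee
wins surely. -/

def Profile.hybrid {B : Type} {m : ℕ} (P P' : Profile B m) (t : ℕ) : Profile B m :=
  fun j => if j.val < t then P' j else P j

theorem Profile.hybrid_zero {B : Type} {m : ℕ} (P P' : Profile B m) :
    Profile.hybrid P P' 0 = P := by
  funext j
  simp [Profile.hybrid]

theorem Profile.hybrid_self_length {B : Type} {m : ℕ} (P P' : Profile B m) :
    Profile.hybrid P P' m = P' := by
  funext j
  simp [Profile.hybrid, j.isLt]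

theorem Profile.neighboring_hybrid_succ {B : Type} {m : ℕ} (P P' : Profile B m)
    {t : ℕ} (ht : t < m) :
    Neighboring (Profile.hybrid P P' t) (Profile.hybrid P P' (t + 1)) := by
  refine ⟨⟨t, ht⟩, fun j hj => ?_⟩
  have hjt : j.val ≠ t := fun h => hj (Fin.ext h)
  have hiff : j.val < t + 1 ↔ j.val < t := by omega
  simp only [Profile.hybrid, hiff]

namespace DPAt

variable {f : ABCRule A n} {k : ℕ} {ε : ℝ}

theorem prob_pos_of_neighboring (hDP : DPAt f k ε) {P P' : Profile A n} {W : Finset A}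
    (hPP' : Neighboring P P') (hpos : 0 < f.prob P k W) : 0 < f.prob P' k W := by
  refine (f.nonneg P' k W).lt_of_ne fun hzero => ?_
  have := hDP P P' W hPP'
  rw [← hzero, mul_zero] at this
  linarith

theorem prob_pos_of_prob_pos (hDP : DPAt f k ε) {P : Profile A n} (P' : Profile A n)
    {W : Finset A} (hpos : 0 < f.prob P k W) : 0 < f.prob P' k W := by
  have hybrid_pos : ∀ t ≤ n, 0 < f.prob (Profile.hybrid P P' t) k W := by
    intro t
    induction t with
    | zero => exact fun _ => (Profile.hybrid_zero P P').symm ▸ hpos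
    | succ t ih =>
      exact fun ht => prob_pos_of_neighboring hDP (Profile.neighboring_hybrid_succ P P' ht)
        (ih (Nat.le_of_succ_le ht))
  simpa only [Profile.hybrid_self_length] using hybrid_pos n le_rfl

end DPAt

theorem ABCRule.prob_eq_zero_of_prob_eq_one (f : ABCRule A n) {P : Profile A n} {k : ℕ}
    {W W' : Finset A} (hW : f.prob P k W = 1) (hne : W' ≠ W) : f.prob P k W' = 0 := by
  by_contra hW'
  have hWcard : W.card = k := f.size_eq P k W (by rw [hW]; exact one_ne_zero)
  have hpair : ({W, W'} : Finset (Finset A)) ⊆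
      Finset.univ.filter (fun V : Finset A => V.card = k) := by
    simp [Finset.insert_subset_iff, hWcard, f.size_eq P k W' hW']
  have hsum := Finset.sum_le_sum_of_subset_of_nonneg hpair fun V _ _ => f.nonneg P k V
  rw [Finset.sum_pair hne.symm, f.sum_one P k (hWcard ▸ Finset.card_le_univ W), hW] at hsum
  exact hW' (le_antisymm (by linarith) (f.nonneg P k W'))

theorem dp_not_condorcet_general (f : ABCRule A n) (ε : ℝ) (hDP : DP f ε)
    (hW : ∃ (P P' : Profile A n) (k : ℕ) (W W' : Finset A),
      CondorcetCommittee P k W ∧ CondorcetCommittee P' k W' ∧ W ≠ W') :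
    ¬ CondorcetCrit f := by
  intro hCC
  obtain ⟨P, P', k, W, W', hPW, hP'W', hne⟩ := hW
  have hpos : 0 < f.prob P' k W :=
    DPAt.prob_pos_of_prob_pos (hDP k) P' (by rw [hCC P k W hPW]; exact one_pos)
  have hzero : f.prob P' k W = 0 := f.prob_eq_zero_of_prob_eq_one (hCC P' k W' hP'W') hne
  exact hpos.ne' hzero

/-- No ε-DP (ε > 0) ABC rule satisfies the exact Condorcet criterion,
provided two profiles with distinct Condorcet committees (for the same size k) exist. -/
theorem dp_not_condorcet (f : ABCRule A n) (ε : ℝ) (hε : 0 < ε) (hDP : DP f ε)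
    (hW : ∃ (P P' : Profile A n) (k : ℕ) (W W' : Finset A),
      CondorcetCommittee P k W ∧ CondorcetCommittee P' k W' ∧ W ≠ W') :
    ¬ CondorcetCrit f :=
  dp_not_condorcet_general f ε hDP hW
end
end

section
/- For any ε > 0 and θ > e^ε, there is no randomized approval-based committee rule satisfying both ε-DP and θ-justified representation, assuming m ≥ k+1 and n ≥ 2⌈n/k⌉ - 1 (i.e., the witnessing profiles are well-defined). -/
open scoped Classical

noncomputable section

variable {A : Type} [Fintype A] [DecidableEq A] {n : ℕ}

/-!
Fix a size-`k` committee `W`, alternatives `c ∉ W` and `d ∈ W`, and let `W' = W - d + c`.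
With `a + 1 = ⌈n/k⌉`, let `a + 1` voters approve only `c` and `a` voters only `d` in `Q`,
and `a` resp. `a + 1` in the neighbouring profile `Q'`. Only a block of `a + 1` voters is
cohesive, so `W'` is JR and `W` is not at `Q`, and the other way round at `Q'`. Chaining θ-JR
and ε-DP around the cycle gives `θ² p_Q(W) ≤ e^{2ε} p_Q(W)`, hence `p_Q(W) = 0`. By group
privacy a zero probability at one profile is zero at all of them, so every size-`k` committee
has probability zero at the empty profile, contradicting that these probabilities sum to one.
-/

open Finset

theorem Nat.exists_mul_lt_le_succ_mul {n k : ℕ} (hk : 0 < k) (hn : 0 < n) :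
    ∃ a, (n + k - 1) / k = a + 1 ∧ a * k < n ∧ n ≤ (a + 1) * k := by
  refine ⟨(n - 1) / k, ?_, ?_, ?_⟩
  · rw [show n + k - 1 = n - 1 + k by omega, Nat.add_div_right _ hk]
  · have := Nat.div_mul_le_self (n - 1) k
    omega
  · have := Nat.lt_div_mul_add (a := n - 1) hk
    rw [add_mul, one_mul]
    omega

theorem Fin.card_filter_le_val_lt {a b : ℕ} (hb : b ≤ n) :
    #{i : Fin n | a ≤ (i : ℕ) ∧ (i : ℕ) < b} = b - a := by
  rw [← card_map Fin.valEmbedding, map_filter', Fin.map_valEmbedding_univ, ← Nat.card_Ico]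
  congr 1
  ext x
  simp only [mem_filter, mem_Iio, Fin.valEmbedding_apply, Fin.exists_iff, mem_Ico]
  constructor
  · rintro ⟨-, i, -, hi, rfl⟩
    exact hi
  · intro hx
    exact ⟨by omega, x, by omega, hx, rfl⟩

theorem Neighboring.symm {α : Type} {m : ℕ} {P P' : Profile α m} (h : Neighboring P P') :
    Neighboring P' P :=
  let ⟨i, hi⟩ := h
  ⟨i, fun j hj => (hi j hj).symm⟩

theorem ABCRule.exists_prob_ne_zero (f : ABCRule A n) {k : ℕ} (hk : k ≤ Fintype.card A)
    (P : Profile A n) : ∃ W : Finset A, W.card = k ∧ f.prob P k W ≠ 0 := by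
  by_contra! h
  have hsum := f.sum_one P k hk
  rw [sum_eq_zero fun W hW => h W (mem_filter.mp hW).2] at hsum
  exact zero_ne_one hsum

namespace DPAt

variable {f : ABCRule A n} {k : ℕ} {ε : ℝ}

theorem prob_le_exp_mul_prob (h : DPAt f k ε) (P Q : Profile A n) (W : Finset A) :
    f.prob P k W ≤ Real.exp (n * ε) * f.prob Q k W := by
  let hybrid : ℕ → Profile A n := fun m i => if (i : ℕ) < m then P i else Q i
  have hstep : ∀ m ≤ n, f.prob (hybrid m) k W ≤ Real.exp (m * ε) * f.prob Q k W := by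
    intro m hm
    induction m with
    | zero => simp [hybrid]
    | succ m ih =>
      have hnb : Neighboring (hybrid (m + 1)) (hybrid m) := by
        refine ⟨⟨m, hm⟩, fun j hj => ?_⟩
        have hjm : (j : ℕ) ≠ m := fun h => hj (Fin.ext h)
        simp only [hybrid]
        congr 1
        exact propext (by omega)
      calc f.prob (hybrid (m + 1)) k W ≤ Real.exp ε * f.prob (hybrid m) k W := h _ _ W hnb
        _ ≤ Real.exp ε * (Real.exp (m * ε) * f.prob Q k W) := by gcongr; exact ih (by omega)
        _ = Real.exp ((m + 1 : ℕ) * ε) * f.prob Q k W := by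
          rw [← mul_assoc, ← Real.exp_add]
          push_cast
          ring_nf
  simpa [hybrid] using hstep n le_rfl

theorem prob_eq_zero_of_prob_eq_zero (h : DPAt f k ε) {Q : Profile A n} {W : Finset A}
    (hQ : f.prob Q k W = 0) (P : Profile A n) : f.prob P k W = 0 :=
  le_antisymm (by simpa [hQ] using h.prob_le_exp_mul_prob P Q W) (f.nonneg P k W)

theorem prob_eq_zero_of_thetaJR {θ : ℝ} (hDP : DPAt f k ε) (hJR : ThetaJR f θ)
    (hθ : Real.exp ε < θ) {Q Q' : Profile A n} (hQQ' : Neighboring Q Q') {W W' : Finset A}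
    (hW'Q : JRsat Q k W') (hWQ : ¬ JRsat Q k W) (hWQ' : JRsat Q' k W)
    (hW'Q' : ¬ JRsat Q' k W') :
    f.prob Q k W = 0 := by
  have hθpos : 0 < θ := (Real.exp_pos ε).trans hθ
  have hcycle : θ * θ * f.prob Q k W ≤ Real.exp ε * Real.exp ε * f.prob Q k W :=
    calc θ * θ * f.prob Q k W ≤ θ * f.prob Q k W' := by
          rw [mul_assoc]
          exact mul_le_mul_of_nonneg_left (hJR Q k W' W hW'Q hWQ'.1 hWQ) hθpos.le
      _ ≤ θ * (Real.exp ε * f.prob Q' k W') := by gcongr; exact hDP Q Q' W' hQQ'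
      _ = Real.exp ε * (θ * f.prob Q' k W') := by ring
      _ ≤ Real.exp ε * f.prob Q' k W := by gcongr; exact hJR Q' k W W' hWQ' hW'Q.1 hW'Q'
      _ ≤ Real.exp ε * (Real.exp ε * f.prob Q k W) := by gcongr; exact hDP Q' Q W hQQ'.symm
      _ = Real.exp ε * Real.exp ε * f.prob Q k W := by ring
  have hθ2 : Real.exp ε * Real.exp ε < θ * θ := mul_self_lt_mul_self (Real.exp_pos ε).le hθ
  by_contra hne
  have hpos : 0 < f.prob Q k W := lt_of_le_of_ne (f.nonneg Q k W) (Ne.symm hne)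
  exact absurd hcycle (not_le.mpr (mul_lt_mul_of_pos_right hθ2 hpos))

end DPAt

def Profile.ofOption {α : Type} {m : ℕ} (g : Fin m → Option α) : Profile α m :=
  fun i => (g i).toFinset

theorem mem_commonApproved_ofOption {g : Fin n → Option A} {V : Finset (Fin n)} {a : A} :
    a ∈ commonApproved (Profile.ofOption g) V ↔ ∀ i ∈ V, g i = some a := by
  simp [commonApproved, Profile.ofOption]

theorem jrsat_ofOption_iff (hn : 0 < n) (g : Fin n → Option A) (k : ℕ) (W : Finset A) :
    JRsat (Profile.ofOption g) k W ↔
      W.card = k ∧ ∀ a, n ≤ #{i | g i = some a} * k → a ∈ W := by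
  refine and_congr_right fun _ => ⟨fun hJR a ha => ?_, fun hW V ⟨hV, hcommon⟩ => ?_⟩
  · have hcoh : Cohesive (Profile.ofOption g) k 1 {i | g i = some a} :=
      ⟨by simpa using ha,
        card_pos.mpr ⟨a, mem_commonApproved_ofOption.mpr fun i hi => (mem_filter.mp hi).2⟩⟩
    obtain ⟨i, hi, b, hb⟩ := hJR _ hcoh
    simp only [Profile.ofOption, mem_inter, Option.mem_toFinset, (mem_filter.mp hi).2,
      Option.mem_some_iff] at hb
    exact hb.1 ▸ hb.2
  · obtain ⟨a, ha⟩ := card_pos.mp hcommon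
    rw [mem_commonApproved_ofOption] at ha
    obtain ⟨i, hi⟩ : V.Nonempty := card_pos.mp <| Nat.pos_of_ne_zero fun h0 => by
      rw [h0] at hV
      omega
    have hsub : V ⊆ ({i | g i = some a} : Finset (Fin n)) :=
      fun j hj => mem_filter.mpr ⟨mem_univ j, ha j hj⟩
    have haW : a ∈ W := hW a <| (one_mul n ▸ hV).trans (Nat.mul_le_mul_right k (card_le_card hsub))
    exact ⟨i, hi, a, by simp [Profile.ofOption, ha i hi, haW]⟩

def twoBlocks {α : Type} {m : ℕ} (c d : α) (a b : ℕ) : Fin m → Option α :=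
  fun i => if (i : ℕ) < a then some c else if (i : ℕ) < a + b then some d else none

theorem card_twoBlocks_eq_some {α : Type} [DecidableEq α] {m : ℕ} {c d x : α} (hcd : c ≠ d)
    {a b : ℕ} (hab : a + b ≤ m) :
    #{i : Fin m | twoBlocks c d a b i = some x} =
      if x = c then a else if x = d then b else 0 := by
  split_ifs with hc hd
  · subst hc
    rw [filter_congr fun i _ => show twoBlocks x d a b i = some x ↔ (i : ℕ) < a by
      unfold twoBlocks; split_ifs <;> simp_all [hcd.symm]]
    rw [Fin.card_filter_val_lt]
    omega
  · subst hd
    rw [filter_congr fun i _ =>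
      show twoBlocks c x a b i = some x ↔ a ≤ (i : ℕ) ∧ (i : ℕ) < a + b by
        unfold twoBlocks; split_ifs <;> simp_all]
    rw [Fin.card_filter_le_val_lt hab]
    omega
  · rw [card_eq_zero, filter_eq_empty_iff]
    intro i _
    unfold twoBlocks
    split_ifs <;> simp [Ne.symm hc, Ne.symm hd]

theorem jrsat_twoBlocks_iff (hn : 0 < n) {c d : A} (hcd : c ≠ d) {a b : ℕ} (hab : a + b ≤ n)
    (k : ℕ) (W : Finset A) :
    JRsat (Profile.ofOption (twoBlocks c d a b : Fin n → Option A)) k W ↔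
      W.card = k ∧ (n ≤ a * k → c ∈ W) ∧ (n ≤ b * k → d ∈ W) := by
  rw [jrsat_ofOption_iff hn]
  refine and_congr_right fun _ => ⟨fun h => ⟨fun ha => h c ?_, fun hb => h d ?_⟩, ?_⟩
  · rwa [card_twoBlocks_eq_some hcd hab, if_pos rfl]
  · rwa [card_twoBlocks_eq_some hcd hab, if_neg hcd.symm, if_pos rfl]
  · rintro ⟨hc, hd⟩ x hx
    rw [card_twoBlocks_eq_some hcd hab] at hx
    split_ifs at hx with hxc hxd
    · exact hxc ▸ hc hx
    · exact hxd ▸ hd hx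
    · omega

theorem neighboring_twoBlocks {α : Type} {m : ℕ} (c d : α) {a : ℕ} (b : ℕ) (ha : a < m) :
    Neighboring (Profile.ofOption (twoBlocks c d (a + 1) b : Fin m → Option α))
      (Profile.ofOption (twoBlocks c d a (b + 1))) := by
  refine ⟨⟨a, ha⟩, fun j hj => ?_⟩
  have hja : (j : ℕ) ≠ a := fun h => hj (Fin.ext h)
  simp only [Profile.ofOption, twoBlocks]
  congr 1
  split_ifs <;> first | rfl | omega

theorem dp_thetaJR_upper_general (f : ABCRule A n) (ε θ : ℝ)
    (hθ : Real.exp ε < θ)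
    (k : ℕ) (hk : 0 < k) (hm : k + 1 ≤ Fintype.card A) (hn0 : 0 < n)
    (hn : 2 * ((n + k - 1) / k) - 1 ≤ n) :
    ¬ (DP f ε ∧ ThetaJR f θ) := by
  rintro ⟨hDP, hJR⟩
  obtain ⟨a, hceil, hsmall, hlarge⟩ := Nat.exists_mul_lt_le_succ_mul hk hn0
  rw [hceil] at hn
  obtain ⟨W, hW, hWpos⟩ := f.exists_prob_ne_zero (k := k) (by omega) (fun _ => ∅)
  obtain ⟨c, hc⟩ : ∃ c, c ∉ W := by
    by_contra! h
    rw [eq_univ_of_forall h, card_univ] at hW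
    omega
  obtain ⟨d, hd⟩ : W.Nonempty := card_pos.mp (by omega)
  have hcd : c ≠ d := fun h => hc (h ▸ hd)
  have hQ : f.prob (Profile.ofOption (twoBlocks c d (a + 1) a)) k W = 0 := by
    refine (hDP k).prob_eq_zero_of_thetaJR hJR hθ (neighboring_twoBlocks c d a (by omega))
      (W' := insert c (W.erase d)) ?_ ?_ ?_ ?_ <;>
      rw [jrsat_twoBlocks_iff hn0 hcd (by omega)] <;>
      simp [hW, hc, hd, hcd, hcd.symm, hlarge, hsmall.not_ge, card_insert_of_notMem,
        card_erase_of_mem, Nat.sub_add_cancel hk]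
  exact hWpos ((hDP k).prob_eq_zero_of_prob_eq_zero hQ _)

/-- For ε > 0 and θ > e^ε, no ABC rule satisfies both ε-DP and θ-JR
(assuming m ≥ k+1, m ≥ 3, and n ≥ 2⌈n/k⌉ − 1 so the witness profiles exist). -/
theorem dp_thetaJR_upper (hA : 3 ≤ Fintype.card A) (f : ABCRule A n) (ε θ : ℝ)
    (hε : 0 < ε) (hθ : Real.exp ε < θ)
    (k : ℕ) (hk : 0 < k) (hm : k + 1 ≤ Fintype.card A) (hn0 : 0 < n)
    (hn : 2 * ((n + k - 1) / k) - 1 ≤ n) :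
    ¬ (DP f ε ∧ ThetaJR f θ) :=
  dp_thetaJR_upper_general f ε θ hθ k hk hm hn0 hn
end
end

section
/- For any ε > 0 and κ > e^{ε⌈n/k⌉}, there is no randomized approval-based committee rule satisfying both ε-DP and κ-extended justified representation, assuming n = ⌈n/k⌉·k and m ≥ k+1. -/
open scoped Classical

noncomputable section

variable {A : Type} [Fintype A] [DecidableEq A] {n : ℕ}

lemma neighboring_symm' {A : Type} {n : ℕ} {P P' : Profile A n}
    (h : Neighboring P P') : Neighboring P' P := by
  obtain ⟨i, hi⟩ := h
  exact ⟨i, fun j hj => (hi j hj).symm⟩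

lemma dp_chain' {A : Type} [Fintype A] [DecidableEq A] {n : ℕ} (f : ABCRule A n)
    (ε : ℝ) (k : ℕ) (hf : DP f ε) (Q : ℕ → Profile A n)
    (hQ : ∀ t, Neighboring (Q t) (Q (t+1))) (W : Finset A) :
    ∀ t : ℕ, f.prob (Q t) k W ≤ Real.exp (t * ε) * f.prob (Q 0) k W ∧
      f.prob (Q 0) k W ≤ Real.exp (t * ε) * f.prob (Q t) k W := by
  intro t
  induction t with
  | zero => simp
  | succ t ih =>
    have h1 : f.prob (Q (t+1)) k W ≤ Real.exp ε * f.prob (Q t) k W :=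
      hf k (Q (t+1)) (Q t) W (neighboring_symm' (hQ t))
    have h2 : f.prob (Q t) k W ≤ Real.exp ε * f.prob (Q (t+1)) k W :=
      hf k (Q t) (Q (t+1)) W (hQ t)
    have he : Real.exp (((t : ℝ) + 1) * ε) = Real.exp ε * Real.exp (t * ε) := by
      rw [← Real.exp_add]; ring_nf
    have hexp : (0:ℝ) ≤ Real.exp ε := (Real.exp_pos ε).le
    constructor
    · calc f.prob (Q (t+1)) k W ≤ Real.exp ε * f.prob (Q t) k W := h1
        _ ≤ Real.exp ε * (Real.exp (t * ε) * f.prob (Q 0) k W) :=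
            mul_le_mul_of_nonneg_left ih.1 hexp
        _ = Real.exp (((t:ℝ)+1) * ε) * f.prob (Q 0) k W := by rw [he]; ring
        _ = Real.exp (((t+1 : ℕ):ℝ) * ε) * f.prob (Q 0) k W := by push_cast; ring_nf
    · calc f.prob (Q 0) k W ≤ Real.exp (t * ε) * f.prob (Q t) k W := ih.2
        _ ≤ Real.exp (t * ε) * (Real.exp ε * f.prob (Q (t+1)) k W) :=
            mul_le_mul_of_nonneg_left h2 (Real.exp_pos _).le
        _ = Real.exp (((t:ℝ)+1) * ε) * f.prob (Q (t+1)) k W := by rw [he]; ring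
        _ = Real.exp (((t+1 : ℕ):ℝ) * ε) * f.prob (Q (t+1)) k W := by push_cast; ring_nf

lemma card_filter_val_lt (n s : ℕ) (hsn : s ≤ n) :
    (Finset.univ.filter (fun i : Fin n => (i:ℕ) < s)).card = s := by
  have : Finset.univ.filter (fun i : Fin n => (i:ℕ) < s)
      = Finset.map (Fin.castLEEmb hsn) Finset.univ := by
    ext i
    simp only [Finset.mem_filter, Finset.mem_univ, true_and, Finset.mem_map,
      Fin.castLEEmb_apply]
    constructor
    · intro h
      exact ⟨⟨(i:ℕ), h⟩, Fin.ext rfl⟩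
    · rintro ⟨a, rfl⟩
      exact a.isLt
  rw [this, Finset.card_map, Finset.card_univ, Fintype.card_fin]

/-- For ε > 0 and κ > e^{ε·⌈n/k⌉}, no ABC rule satisfies both ε-DP and
κ-EJR (assuming n = ⌈n/k⌉·k, i.e. n = s·k with s = ⌈n/k⌉, and m ≥ k+1). -/
theorem dp_kappaEJR_upper (f : ABCRule A n) (ε κ : ℝ) (hε : 0 < ε)
    (k s : ℕ) (hk : 0 < k) (hs : 0 < s) (hn : n = s * k)
    (hm : k + 1 ≤ Fintype.card A)
    (hκ : Real.exp (s * ε) < κ) :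
    ¬ (DP f ε ∧ KappaEJR f κ) := by
  rintro ⟨hDP, hEJR⟩
  have npos : 0 < n := hn ▸ Nat.mul_pos hs hk
  have hsn : s ≤ n := by rw [hn]; exact Nat.le_mul_of_pos_right s hk
  -- pick k+1 alternatives
  obtain ⟨T, -, hT⟩ := Finset.exists_subset_card_eq (s := (Finset.univ : Finset A)) (n := k+1)
    (by simpa using hm)
  have hTne : T.Nonempty := Finset.card_pos.mp (by omega)
  obtain ⟨b, hbT⟩ := hTne
  set Wstar : Finset A := T.erase b with hWstar_def
  have hbWstar : b ∉ Wstar := Finset.notMem_erase b T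
  have hWstarcard : Wstar.card = k := by
    rw [hWstar_def, Finset.card_erase_of_mem hbT, hT]
    omega
  have hWstarne : Wstar.Nonempty := Finset.card_pos.mp (by omega)
  obtain ⟨a0, ha0⟩ := hWstarne
  set W' : Finset A := insert b (Wstar.erase a0) with hW'_def
  have hbW' : b ∈ W' := Finset.mem_insert_self b _
  have hW'card : W'.card = k := by
    rw [hW'_def, Finset.card_insert_of_notMem
      (fun h => hbWstar (Finset.mem_of_mem_erase h)),
      Finset.card_erase_of_mem ha0, hWstarcard]
    omega
  have hW'ne : W' ≠ Wstar := fun h => hbWstar (h ▸ hbW')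
  have hinterW' : Wstar ∩ W' = Wstar.erase a0 := by
    ext a
    simp only [Finset.mem_inter, hW'_def, Finset.mem_insert, Finset.mem_erase]
    constructor
    · rintro ⟨haW, (rfl | ⟨hne, _⟩)⟩
      · exact absurd haW hbWstar
      · exact ⟨hne, haW⟩
    · rintro ⟨hne, haW⟩
      exact ⟨haW, Or.inr ⟨hne, haW⟩⟩
  have hinterW'card : (Wstar ∩ W').card = k - 1 := by
    rw [hinterW', Finset.card_erase_of_mem ha0, hWstarcard]
  -- the chain of profiles
  set Q : ℕ → Profile A n := fun t i => if (i:ℕ) < t then ({b} : Finset A) else Wstar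
    with hQdef
  have hQ0 : ∀ i, Q 0 i = Wstar := fun i => if_neg (Nat.not_lt_zero _)
  have hQs_lt : ∀ i : Fin n, (i:ℕ) < s → Q s i = {b} := fun i hi => if_pos hi
  have hQs_ge : ∀ i : Fin n, s ≤ (i:ℕ) → Q s i = Wstar := fun i hi =>
    if_neg (Nat.not_lt.mpr hi)
  have hQnb : ∀ t, Neighboring (Q t) (Q (t+1)) := by
    intro t
    by_cases ht : t < n
    · refine ⟨⟨t, ht⟩, fun j hj => ?_⟩
      have hjt : (j:ℕ) ≠ t := fun h => hj (Fin.ext h)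
      simp only [hQdef]
      congr 1
      simp only [eq_iff_iff]
      omega
    · refine ⟨⟨0, npos⟩, fun j _ => ?_⟩
      have : (j:ℕ) < t ∧ (j:ℕ) < t + 1 := ⟨by omega, by omega⟩
      simp only [hQdef, if_pos this.1, if_pos this.2]
  -- nonempty groups
  have hVne : ∀ (ℓ : ℕ) (V : Finset (Fin n)), 1 ≤ ℓ → ℓ * n ≤ V.card * k →
      V.Nonempty := by
    intro ℓ V hℓ hc
    rw [← Finset.card_pos]
    by_contra h
    push_neg at h
    interval_cases h' : V.card
    · simp at hc; omega
  -- EJR facts at Q 0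
  have hEJR0 : EJRsat (Q 0) k Wstar := by
    refine ⟨hWstarcard, fun ℓ V hℓ hcoh => ?_⟩
    obtain ⟨i, hiV⟩ := hVne ℓ V hℓ hcoh.1
    refine ⟨i, hiV, ?_⟩
    have hVn : V.card ≤ n := by
      simpa using Finset.card_le_card (Finset.subset_univ V)
    have hℓk : ℓ ≤ k := by
      have : ℓ * n ≤ k * n := le_trans hcoh.1 (by nlinarith)
      exact Nat.le_of_mul_le_mul_right this npos
    rw [hQ0 i, Finset.inter_self, hWstarcard]
    exact hℓk
  have hnot0 : ∀ W2 : Finset A, W2.card = k → W2 ≠ Wstar → ¬ EJRsat (Q 0) k W2 := by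
    intro W2 hW2 hne hEJ
    have hcoh : Cohesive (Q 0) k k Finset.univ := by
      constructor
      · simp [Finset.card_univ, hn]; ring_nf; omega
      · have hsub : Wstar ⊆ commonApproved (Q 0) Finset.univ := by
          intro a ha
          simp only [commonApproved, Finset.mem_filter, Finset.mem_univ, true_and]
          intro i _
          rw [hQ0 i]; exact ha
        calc k = Wstar.card := hWstarcard.symm
          _ ≤ _ := Finset.card_le_card hsub
    obtain ⟨i, -, hle⟩ := hEJ.2 k Finset.univ hk hcoh
    rw [hQ0 i] at hle
    have h1 : (Wstar ∩ W2).card ≤ k := by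
      calc (Wstar ∩ W2).card ≤ W2.card := Finset.card_le_card Finset.inter_subset_right
        _ = k := hW2
    have heq : Wstar ∩ W2 = W2 := Finset.eq_of_subset_of_card_le
      Finset.inter_subset_right (by omega)
    have : W2 ⊆ Wstar := heq ▸ Finset.inter_subset_left
    exact hne (Finset.eq_of_subset_of_card_le this (by omega))
  -- EJR facts at Q s
  have hEJRs : EJRsat (Q s) k W' := by
    refine ⟨hW'card, fun ℓ V hℓ hcoh => ?_⟩
    by_cases hb : ∃ i ∈ V, (i:ℕ) < s
    · obtain ⟨i, hiV, his⟩ := hb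
      refine ⟨i, hiV, ?_⟩
      have hPi : Q s i = {b} := hQs_lt i his
      have hsub : commonApproved (Q s) V ⊆ {b} := by
        intro a ha
        simp only [commonApproved, Finset.mem_filter, Finset.mem_univ, true_and] at ha
        have := ha i hiV
        rwa [hPi] at this
      have hℓ1 : ℓ ≤ 1 := le_trans hcoh.2 (by simpa using Finset.card_le_card hsub)
      have : Q s i ∩ W' = {b} := by
        rw [hPi]; exact Finset.singleton_inter_of_mem hbW'
      rw [this, Finset.card_singleton]
      exact hℓ1
    · push_neg at hb
      obtain ⟨i, hiV⟩ := hVne ℓ V hℓ hcoh.1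
      refine ⟨i, hiV, ?_⟩
      have hPi : Q s i = Wstar := hQs_ge i (hb i hiV)
      have hdisj : Disjoint V (Finset.univ.filter (fun j : Fin n => (j:ℕ) < s)) := by
        rw [Finset.disjoint_left]
        intro j hj hj'
        simp only [Finset.mem_filter, Finset.mem_univ, true_and] at hj'
        exact absurd hj' (Nat.not_lt.mpr (hb j hj))
      have hcard : V.card + s ≤ n := by
        have h1 := Finset.card_le_card (Finset.subset_univ
          (V ∪ Finset.univ.filter (fun j : Fin n => (j:ℕ) < s)))
        rw [Finset.card_union_of_disjoint hdisj, card_filter_val_lt n s hsn] at h1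
        simpa using h1
      have hls : ℓ * s ≤ V.card := by
        have h2 : (ℓ * s) * k ≤ V.card * k := by
          calc (ℓ * s) * k = ℓ * n := by rw [hn]; ring
            _ ≤ V.card * k := hcoh.1
        exact Nat.le_of_mul_le_mul_right h2 hk
      have hℓk : ℓ + 1 ≤ k := by
        have hcard2 : V.card + s ≤ s * k := by rw [← hn]; exact hcard
        have h6 : s * (ℓ + 1) ≤ s * k := by
          calc s * (ℓ + 1) = ℓ * s + s := by ring
            _ ≤ V.card + s := by omega
            _ ≤ s * k := hcard2
        exact Nat.le_of_mul_le_mul_left h6 hs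
      rw [hPi, hinterW'card]
      omega
  have hnots : ¬ EJRsat (Q s) k Wstar := by
    intro hEJ
    set V : Finset (Fin n) := Finset.univ.filter (fun i : Fin n => (i:ℕ) < s) with hVdef
    have hVcard : V.card = s := card_filter_val_lt n s hsn
    have hcoh : Cohesive (Q s) k 1 V := by
      constructor
      · rw [hVcard, hn]; omega
      · have : b ∈ commonApproved (Q s) V := by
          simp only [commonApproved, Finset.mem_filter, Finset.mem_univ, true_and]
          intro i hi
          simp only [hVdef, Finset.mem_filter, Finset.mem_univ, true_and] at hi
          rw [hQs_lt i hi]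
          exact Finset.mem_singleton_self b
        exact Finset.card_pos.mpr ⟨b, this⟩
    obtain ⟨i, hiV, hle⟩ := hEJ.2 1 V le_rfl hcoh
    simp only [hVdef, Finset.mem_filter, Finset.mem_univ, true_and] at hiV
    rw [hQs_lt i hiV, Finset.singleton_inter_of_notMem hbWstar] at hle
    simp at hle
  -- probabilities
  set E := Real.exp ((s : ℝ) * ε) with hEdef
  have hEpos : 0 < E := Real.exp_pos _
  have hκpos : 0 < κ := lt_trans hEpos hκ
  have hchain := dp_chain' f ε k hDP Q hQnb
  have h3 : f.prob (Q 0) k Wstar ≤ E * f.prob (Q s) k Wstar := (hchain Wstar s).2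
  have h4 : f.prob (Q s) k W' ≤ E * f.prob (Q 0) k W' := (hchain W' s).1
  have h1 : κ * f.prob (Q 0) k W' ≤ f.prob (Q 0) k Wstar :=
    hEJR (Q 0) k Wstar W' hEJR0 hW'card (hnot0 W' hW'card hW'ne)
  have h2 : κ * f.prob (Q s) k Wstar ≤ f.prob (Q s) k W' :=
    hEJR (Q s) k W' Wstar hEJRs hWstarcard hnots
  have hy : 0 ≤ f.prob (Q 0) k W' := f.nonneg _ _ _
  have hx : 0 ≤ f.prob (Q 0) k Wstar := f.nonneg _ _ _
  have hx' : 0 ≤ f.prob (Q s) k Wstar := f.nonneg _ _ _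
  have c1 : κ * (κ * f.prob (Q 0) k W') ≤ κ * f.prob (Q 0) k Wstar :=
    mul_le_mul_of_nonneg_left h1 hκpos.le
  have c2 : κ * f.prob (Q 0) k Wstar ≤ κ * (E * f.prob (Q s) k Wstar) :=
    mul_le_mul_of_nonneg_left h3 hκpos.le
  have c3 : E * (κ * f.prob (Q s) k Wstar) ≤ E * f.prob (Q s) k W' :=
    mul_le_mul_of_nonneg_left h2 hEpos.le
  have c4 : E * f.prob (Q s) k W' ≤ E * (E * f.prob (Q 0) k W') :=
    mul_le_mul_of_nonneg_left h4 hEpos.le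
  have e1 : κ * (E * f.prob (Q s) k Wstar) = E * (κ * f.prob (Q s) k Wstar) := by ring
  have key : κ * (κ * f.prob (Q 0) k W') ≤ E * (E * f.prob (Q 0) k W') := by
    linarith only [c1, c2, c3, c4, e1]
  have hEκ : E * E < κ * κ := mul_lt_mul'' hκ hκ hEpos.le hEpos.le
  have hy0 : f.prob (Q 0) k W' = 0 := by
    by_contra h
    have hypos : 0 < f.prob (Q 0) k W' := lt_of_le_of_ne hy (Ne.symm h)
    have h7 : E * (E * f.prob (Q 0) k W') < κ * (κ * f.prob (Q 0) k W') := by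
      have h8 := mul_lt_mul_of_pos_right hEκ hypos
      calc E * (E * f.prob (Q 0) k W') = E * E * f.prob (Q 0) k W' := by ring
        _ < κ * κ * f.prob (Q 0) k W' := h8
        _ = κ * (κ * f.prob (Q 0) k W') := by ring
    linarith only [key, h7]
  have hy'le : f.prob (Q s) k W' ≤ 0 := by rw [hy0, mul_zero] at h4; exact h4
  have hx'0 : f.prob (Q s) k Wstar = 0 := by
    have h9 : κ * f.prob (Q s) k Wstar ≤ 0 := le_trans h2 hy'le
    have h10 : κ * f.prob (Q s) k Wstar = 0 :=
      le_antisymm h9 (mul_nonneg hκpos.le hx')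
    exact (mul_eq_zero.mp h10).resolve_left (ne_of_gt hκpos)
  have hx0 : f.prob (Q 0) k Wstar = 0 := by
    rw [hx'0, mul_zero] at h3
    exact le_antisymm h3 hx
  -- contradiction with total probability one
  have hsum := f.sum_one (Q 0) k (le_trans (Nat.le_succ k) hm)
  have hzero : ∑ W ∈ Finset.univ.filter (fun W : Finset A => W.card = k),
      f.prob (Q 0) k W = 0 := by
    refine Finset.sum_eq_zero fun W hW => ?_
    have hWk : W.card = k := (Finset.mem_filter.mp hW).2
    by_cases hWeq : W = Wstar
    · rw [hWeq]; exact hx0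
    · have := hEJR (Q 0) k Wstar W hEJR0 hWk (hnot0 W hWk hWeq)
      have hWnn := f.nonneg (Q 0) k W
      rw [hx0] at this
      have h10 : κ * f.prob (Q 0) k W = 0 :=
        le_antisymm this (mul_nonneg hκpos.le hWnn)
      exact (mul_eq_zero.mp h10).resolve_left (ne_of_gt hκpos)
  rw [hzero] at hsum
  norm_num at hsum
end
end

section
/- The randomized response mechanism for JR — which assigns winning probability proportional to e^{ε/2} to each committee satisfying JR and proportional to 1 to all other size-k committees — satisfies ε-DP and e^{ε/2}-JR. -/
open scoped Classical

noncomputable section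

variable {A : Type} [Fintype A] [DecidableEq A] {n : ℕ}

lemma jrset_card_le {A : Type} [Fintype A] [DecidableEq A] {n : ℕ} (P : Profile A n) (k : ℕ) :
    (JRset P k).card ≤ (Fintype.card A).choose k := by
  have hsub : JRset P k ⊆ Finset.powersetCard k (Finset.univ : Finset A) := by
    intro W hW
    rw [JRset, Finset.mem_filter] at hW
    rw [Finset.mem_powersetCard]
    exact ⟨Finset.subset_univ W, hW.2.1⟩
  calc (JRset P k).card ≤ (Finset.powersetCard k (Finset.univ : Finset A)).card :=
        Finset.card_le_card hsub
    _ = (Fintype.card A).choose k := by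
        rw [Finset.card_powersetCard, Finset.card_univ]

/-- The randomized response mechanism for JR (probability proportional to
e^{ε/2} on JR committees and to 1 elsewhere) satisfies ε-DP and e^{ε/2}-JR. -/
theorem randomizedResponse_JR (f : ABCRule A n) (ε : ℝ) (hε : 0 < ε)
    (hf : ∀ (P : Profile A n) (k : ℕ) (W : Finset A), W.card = k →
      f.prob P k W =
        (if JRsat P k W then Real.exp (ε / 2) else 1) /
          (((JRset P k).card : ℝ) * Real.exp (ε / 2) +
            ((Nat.choose (Fintype.card A) k : ℝ) - ((JRset P k).card : ℝ)))) :
    DP f ε ∧ ThetaJR f (Real.exp (ε / 2)) := by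
  have hs1 : (1 : ℝ) ≤ Real.exp (ε / 2) := Real.one_le_exp (by linarith)
  have hs0 : (0 : ℝ) < Real.exp (ε / 2) := Real.exp_pos _
  have hexp : Real.exp ε = Real.exp (ε / 2) * Real.exp (ε / 2) := by
    rw [← Real.exp_add]; ring_nf
  constructor
  · intro k P P' W _
    by_cases hW : W.card = k
    · by_cases hk : k ≤ Fintype.card A
      · set s := Real.exp (ε / 2) with hsdef
        have hC : (1 : ℝ) ≤ ((Fintype.card A).choose k : ℝ) := by
          exact_mod_cast Nat.one_le_iff_ne_zero.mpr (Nat.choose_pos hk).ne'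
        set C : ℝ := ((Fintype.card A).choose k : ℝ)
        have key : ∀ Q : Profile A n,
            C ≤ ((JRset Q k).card : ℝ) * s + (C - ((JRset Q k).card : ℝ)) ∧
            ((JRset Q k).card : ℝ) * s + (C - ((JRset Q k).card : ℝ)) ≤ C * s := by
          intro Q
          have ht0 : (0 : ℝ) ≤ ((JRset Q k).card : ℝ) := Nat.cast_nonneg _
          have htC : ((JRset Q k).card : ℝ) ≤ C := by
            show ((JRset Q k).card : ℝ) ≤ (((Fintype.card A).choose k : ℕ) : ℝ)
            exact_mod_cast jrset_card_le Q k
          constructor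
          · nlinarith
          · nlinarith
        obtain ⟨hD1, hD2⟩ := key P
        obtain ⟨hD1', hD2'⟩ := key P'
        have hDpos : (0 : ℝ) < ((JRset P k).card : ℝ) * s + (C - ((JRset P k).card : ℝ)) := by
          linarith
        have hDpos' : (0 : ℝ) < ((JRset P' k).card : ℝ) * s + (C - ((JRset P' k).card : ℝ)) := by
          linarith
        rw [hf P k W hW, hf P' k W hW, hexp]
        set numP : ℝ := if JRsat P k W then s else 1 with hnP
        set numP' : ℝ := if JRsat P' k W then s else 1 with hnP'
        have hnum1 : numP ≤ s := by rw [hnP]; split <;> linarith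
        have hnum2 : (1 : ℝ) ≤ numP' := by rw [hnP']; split <;> linarith
        have h1 : numP * ((JRset P' k).card * s + (C - (JRset P' k).card)) ≤
            s * (C * s) := by nlinarith
        have hnd : C ≤ numP' * (((JRset P k).card : ℝ) * s + (C - ((JRset P k).card : ℝ))) := by
          nlinarith
        have h2 : s * (C * s) ≤ s * s * numP' *
            (((JRset P k).card : ℝ) * s + (C - ((JRset P k).card : ℝ))) := by
          nlinarith [mul_le_mul_of_nonneg_left hnd (mul_nonneg hs0.le hs0.le)]
        rw [← mul_div_assoc, div_le_div_iff₀ hDpos hDpos']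
        nlinarith
      · have hchoose : (Fintype.card A).choose k = 0 :=
          Nat.choose_eq_zero_of_lt (lt_of_not_ge hk)
        have hJRe : JRset P k = ∅ := by
          rw [Finset.eq_empty_iff_forall_notMem]
          intro W' hW'
          rw [JRset, Finset.mem_filter] at hW'
          have := hW'.2.1
          have h2 := Finset.card_le_univ W'
          omega
        have : f.prob P k W = 0 := by
          rw [hf P k W hW, hJRe, hchoose]
          simp
        rw [this]
        exact mul_nonneg (Real.exp_pos ε).le (f.nonneg P' k W)
    · have : f.prob P k W = 0 := by
        by_contra h
        exact hW (f.size_eq P k W h)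
      rw [this]
      exact mul_nonneg (Real.exp_pos ε).le (f.nonneg P' k W)
  · intro P k W₁ W₂ hJR1 hW2 hJR2
    have hW1 : W₁.card = k := hJR1.1
    rw [hf P k W₁ hW1, hf P k W₂ hW2, if_pos hJR1, if_neg hJR2]
    rw [mul_one_div]
end
end

section
/- Any randomized ABC rule assigning winning probability proportional to e^{ε/2} to committees satisfying axiom 𝒜 ∈ {JR, PJR, EJR} and proportional to 1 to the rest satisfies ε-DP and e^{ε/2}-𝒜 (i.e., every 𝒜-committee has probability at least e^{ε/2} times that of every non-𝒜-committee). -/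
open scoped Classical

noncomputable section

variable {A : Type} [Fintype A] [DecidableEq A] {n : ℕ}

/-! Every committee has weight `1` or `e = e^{ε/2}`. Changing one ballot changes the weight of a
committee by a factor at most `e`, and the normalizing constant `m e + (C - m)`, which lies between
`C` and `C e` (`C` the number of size-`k` committees, `m` the number of 𝒜-committees), also by a
factor at most `e`; together this gives ε-DP. The ratio `e` between 𝒜-committees and the others is
built into the weights. -/

def rrNormalizer (e : ℝ) (m C : ℕ) : ℝ := m * e + (C - m)

lemma rrNormalizer_pos {e : ℝ} (he : 1 ≤ e) (m : ℕ) {C : ℕ} (hC : 0 < C) :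
    0 < rrNormalizer e m C := by
  have : (0 : ℝ) < C := by exact_mod_cast hC
  unfold rrNormalizer
  nlinarith [(Nat.cast_nonneg m : (0 : ℝ) ≤ m)]

lemma rrNormalizer_le_mul {e : ℝ} (he : 1 ≤ e) (m : ℕ) {m' C : ℕ} (hm' : m' ≤ C) :
    rrNormalizer e m' C ≤ e * rrNormalizer e m C := by
  have hm'C : (0 : ℝ) ≤ C - m' := sub_nonneg.2 (by exact_mod_cast hm')
  have hme : (0 : ℝ) ≤ m * e := by positivity
  unfold rrNormalizer
  nlinarith [mul_nonneg (sub_nonneg.2 he) (add_nonneg hme hm'C)]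

lemma ite_le_mul_ite {e : ℝ} (he : 1 ≤ e) (p q : Prop) [Decidable p] [Decidable q] :
    (if p then e else 1) ≤ e * (if q then e else 1) := by
  split_ifs <;> nlinarith

lemma ite_div_rrNormalizer_le {e : ℝ} (he : 1 ≤ e) {m m' C : ℕ} (hC : 0 < C) (hm' : m' ≤ C)
    (p q : Prop) [Decidable p] [Decidable q] :
    (if p then e else 1) / rrNormalizer e m C ≤
      e * e * ((if q then e else 1) / rrNormalizer e m' C) := by
  have hZ := rrNormalizer_pos he m hC
  have hZ' := rrNormalizer_pos he m' hC
  rw [mul_div_assoc', div_le_div_iff₀ hZ hZ']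
  calc (if p then e else 1) * rrNormalizer e m' C
      ≤ (e * if q then e else 1) * (e * rrNormalizer e m C) :=
        mul_le_mul (ite_le_mul_ite he p q) (rrNormalizer_le_mul he m hm') hZ'.le
          (by split_ifs <;> positivity)
    _ = e * e * (if q then e else 1) * rrNormalizer e m C := by ring

lemma card_eq_of_JRsat_or_PJRsat_or_EJRsat {Ax : Profile A n → ℕ → Finset A → Prop}
    (hAx : Ax = JRsat ∨ Ax = PJRsat ∨ Ax = EJRsat) {P : Profile A n} {k : ℕ} {W : Finset A}
    (h : Ax P k W) : W.card = k := by
  rcases hAx with rfl | rfl | rfl <;> exact h.1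

lemma ABCRule.prob_eq_zero_of_card_ne (f : ABCRule A n) {P : Profile A n} {k : ℕ}
    {W : Finset A} (hW : W.card ≠ k) : f.prob P k W = 0 :=
  by_contra fun h => hW (f.size_eq P k W h)

/-- For any axiom 𝒜 ∈ {JR, PJR, EJR}, the rule assigning probability
proportional to e^{ε/2} to 𝒜-committees and to 1 to the other size-k committees
satisfies ε-DP and e^{ε/2}-𝒜. -/
theorem randomizedResponse_axiom (Ax : Profile A n → ℕ → Finset A → Prop)
    (hAx : Ax = (JRsat : Profile A n → ℕ → Finset A → Prop) ∨
           Ax = (PJRsat : Profile A n → ℕ → Finset A → Prop) ∨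
           Ax = (EJRsat : Profile A n → ℕ → Finset A → Prop))
    (f : ABCRule A n) (ε : ℝ) (hε : 0 < ε)
    (hf : ∀ (P : Profile A n) (k : ℕ) (W : Finset A), W.card = k →
      f.prob P k W =
        (if Ax P k W then Real.exp (ε / 2) else 1) /
          (((Finset.univ.filter (fun W' : Finset A => Ax P k W')).card : ℝ) *
              Real.exp (ε / 2) +
            ((Nat.choose (Fintype.card A) k : ℝ) -
              ((Finset.univ.filter (fun W' : Finset A => Ax P k W')).card : ℝ)))) :
    DP f ε ∧
      ∀ (P : Profile A n) (k : ℕ) (W₁ W₂ : Finset A),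
        Ax P k W₁ → W₂.card = k → ¬ Ax P k W₂ →
          Real.exp (ε / 2) * f.prob P k W₂ ≤ f.prob P k W₁ := by
  have hcard : ∀ {P k W}, Ax P k W → W.card = k := card_eq_of_JRsat_or_PJRsat_or_EJRsat hAx
  have he : 1 ≤ Real.exp (ε / 2) := Real.one_le_exp (by positivity)
  refine ⟨fun k P P' W _ => ?_, fun P k W₁ W₂ h₁ h₂ h₃ => ?_⟩
  · by_cases hW : W.card = k
    · have hC : 0 < (Fintype.card A).choose k :=
        Nat.choose_pos (hW ▸ Finset.card_le_univ W)
      have hm' : (Finset.univ.filter fun W' => Ax P' k W').card ≤ (Fintype.card A).choose k :=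
        Set.Sized.card_le fun W' hW' => hcard (Finset.mem_filter.1 hW').2
      have hexp : Real.exp ε = Real.exp (ε / 2) * Real.exp (ε / 2) := by
        rw [← Real.exp_add, add_halves]
      rw [hf P k W hW, hf P' k W hW, hexp]
      exact ite_div_rrNormalizer_le he hC hm' (Ax P k W) (Ax P' k W)
    · rw [f.prob_eq_zero_of_card_ne hW]
      exact mul_nonneg (Real.exp_pos ε).le (f.nonneg P' k W)
  · rw [hf P k W₁ (hcard h₁), hf P k W₂ h₂, if_pos h₁, if_neg h₃, mul_one_div]
end
end

section
/- In the profile P over n voters where voter j approves {a_1,...,a_k, b_1,...,b_{j-1}}, the nk+1 committees W_{p,q} (for 1 ≤ p ≤ k, 1 ≤ q ≤ n, plus W_{k+1,1}), where W_{p,1} = {a_1,...,a_{k−p+1}, c_1,...,c_{p−1}} and W_{p,q} = {a_1,...,a_{k−p}, b_{q−1}, c_1,...,c_{p−1}} for q > 1, form a chain under Pareto dominance: W_{p1,q1} Pareto-dominates W_{p2,q2} whenever p1 < p2, or p1 = p2 and q1 < q2. -/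
open scoped Classical

noncomputable section

variable {A : Type} [Fintype A] [DecidableEq A] {n : ℕ}

/-- The witness profile: voter `j` (0-indexed) approves `a_1, …, a_k` (encoded as
`1, …, k`) together with `b_1, …, b_j` (encoded as `k+1, …, k+j`). -/
def chainProfile (k n : ℕ) : Profile ℕ n :=
  fun j => Finset.Icc 1 k ∪ Finset.Icc (k + 1) (k + (j : ℕ))

/-- The committee `W_{p,q}`: for `q = 1` it is `{a_1,…,a_{k−p+1}} ∪ {c_1,…,c_{p−1}}`,
and for `q > 1` it is `{a_1,…,a_{k−p}} ∪ {b_{q−1}} ∪ {c_1,…,c_{p−1}}`, where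
`c_i` is encoded as `k + n + i`. -/
def Wpq (k n p q : ℕ) : Finset ℕ :=
  if q = 1 then
    Finset.Icc 1 (k + 1 - p) ∪ Finset.Icc (k + n + 1) (k + n + (p - 1))
  else
    (Finset.Icc 1 (k - p) ∪ {k + (q - 1)}) ∪ Finset.Icc (k + n + 1) (k + n + (p - 1))

/-! Voter `j` (0-indexed) approves exactly `k - p + [q ≤ j + 1]` members of `W_{p,q}`: the first
`k - p` of the `a`'s, plus `b_{q-1}` (or `a_{k-p+1}` when `q = 1`) once `j ≥ q - 1`, and none of the
`c`'s. So `p` shifts the whole score vector down by one, while `q` only moves the step where it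
rises by one; this orders the committees lexicographically in `(p, q)`, and the voter `j = q₁ - 1`
witnesses strictness. -/

open Finset

-- Stated with `+ p` to avoid truncated subtraction; this also covers `W_{k+1,1}`, which meets no ballot.
lemma card_Wpq_inter_chainProfile_add {k n p q : ℕ} (hp : 1 ≤ p)
    (hpk : p ≤ k ∨ (p = k + 1 ∧ q = 1)) (j : Fin n) :
    #(Wpq k n p q ∩ chainProfile k n j) + p = k + if q ≤ j + 1 then 1 else 0 := by
  have hj := j.isLt
  rcases eq_or_ne q 1 with rfl | hq
  · have hW : Wpq k n p 1 ∩ chainProfile k n j = Icc 1 (k + 1 - p) := by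
      ext x
      simp only [Wpq, chainProfile, if_pos, mem_inter, mem_union, mem_Icc]
      omega
    rw [hW, Nat.card_Icc, if_pos (by omega)]
    omega
  by_cases hqj : q ≤ j + 1
  · have hW : Wpq k n p q ∩ chainProfile k n j = insert (k + (q - 1)) (Icc 1 (k - p)) := by
      ext x
      simp only [Wpq, chainProfile, if_neg hq, mem_inter, mem_union, mem_insert, mem_singleton,
        mem_Icc]
      omega
    rw [hW, card_insert_of_notMem (by simp only [mem_Icc]; omega), Nat.card_Icc, if_pos hqj]
    omega
  · have hW : Wpq k n p q ∩ chainProfile k n j = Icc 1 (k - p) := by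
      ext x
      simp only [Wpq, chainProfile, if_neg hq, mem_inter, mem_union, mem_singleton, mem_Icc]
      omega
    rw [hW, Nat.card_Icc, if_neg hqj]
    omega

theorem chain_paretoDom_general (k n : ℕ) (p₁ q₁ p₂ q₂ : ℕ)
    (hp₁ : 1 ≤ p₁) (hp₁k : p₁ ≤ k) (hq₁ : 1 ≤ q₁) (hq₁n : q₁ ≤ n)
    (hp₂ : p₂ ≤ k ∨ (p₂ = k + 1 ∧ q₂ = 1))
    (hlt : p₁ < p₂ ∨ (p₁ = p₂ ∧ q₁ < q₂)) :
    ParetoDom (chainProfile k n) (Wpq k n p₁ q₁) (Wpq k n p₂ q₂) := by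
  have score₁ := card_Wpq_inter_chainProfile_add (n := n) (q := q₁) hp₁ (.inl hp₁k)
  have score₂ := card_Wpq_inter_chainProfile_add (n := n) (p := p₂) (by omega) hp₂
  refine ⟨fun j => ?_, ⟨q₁ - 1, by omega⟩, ?_⟩
  · have h₁ := score₁ j
    have h₂ := score₂ j
    split_ifs at h₁ h₂ <;> omega
  · have h₁ := score₁ ⟨q₁ - 1, by omega⟩
    have h₂ := score₂ ⟨q₁ - 1, by omega⟩
    simp only at h₁ h₂
    split_ifs at h₁ h₂ <;> omega

/-- the committees `W_{p,q}` form a chain under Pareto dominance in the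
profile above: `W_{p₁,q₁}` Pareto-dominates `W_{p₂,q₂}` whenever `p₁ < p₂`, or
`p₁ = p₂` and `q₁ < q₂` (indices in range, including the final committee `W_{k+1,1}`). -/
theorem chain_paretoDom (k n : ℕ) (hk : 0 < k) (hn : 0 < n)
    (p₁ q₁ p₂ q₂ : ℕ)
    (hp₁ : 1 ≤ p₁) (hp₁k : p₁ ≤ k) (hq₁ : 1 ≤ q₁) (hq₁n : q₁ ≤ n)
    (hq₂ : 1 ≤ q₂) (hq₂n : q₂ ≤ n)
    (hp₂ : p₂ ≤ k ∨ (p₂ = k + 1 ∧ q₂ = 1))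
    (hlt : p₁ < p₂ ∨ (p₁ = p₂ ∧ q₁ < q₂)) :
    ParetoDom (chainProfile k n) (Wpq k n p₁ q₁) (Wpq k n p₂ q₂) :=
  chain_paretoDom_general k n p₁ q₁ p₂ q₂ hp₁ hp₁k hq₁ hq₁n hp₂ hlt
end
end

section
/- The exponential mechanism with approval-voting score — selecting a size-k committee with probability proportional to e^{AV_P(W)·ε/(2k)}, where AV_P(W) = Σ_j |P_j ∩ W| — satisfies ε-DP and e^{ε/(2k)}-Pareto efficiency. -/
open scoped Classical

noncomputable section

variable {A : Type} [Fintype A] [DecidableEq A] {n : ℕ}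

lemma AV_neighbor_le {P P' : Profile A n} (h : Neighboring P P') (W : Finset A) :
    AV P W ≤ AV P' W + W.card := by
  obtain ⟨i, hi⟩ := h
  have h1 : AV P W = ∑ j ∈ Finset.univ.erase i, (P j ∩ W).card + (P i ∩ W).card := by
    rw [AV, ← Finset.sum_erase_add _ _ (Finset.mem_univ i)]
  have h2 : ∑ j ∈ Finset.univ.erase i, (P j ∩ W).card + (P' i ∩ W).card = AV P' W := by
    rw [AV, ← Finset.sum_erase_add _ _ (Finset.mem_univ i)]
    congr 1
    exact Finset.sum_congr rfl fun j hj => by rw [hi j (Finset.ne_of_mem_erase hj)]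
  calc AV P W = ∑ j ∈ Finset.univ.erase i, (P j ∩ W).card + (P i ∩ W).card := h1
    _ ≤ (∑ j ∈ Finset.univ.erase i, (P j ∩ W).card + (P' i ∩ W).card) + W.card := by
        have : (P i ∩ W).card ≤ W.card := Finset.card_le_card (Finset.inter_subset_right)
        omega
    _ = AV P' W + W.card := by rw [h2]

lemma AV_paretoDom {P : Profile A n} {W₁ W₂ : Finset A} (h : ParetoDom P W₁ W₂) :
    AV P W₂ + 1 ≤ AV P W₁ := by
  obtain ⟨hle, i, hi⟩ := h
  have : AV P W₂ < AV P W₁ := by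
    apply Finset.sum_lt_sum
    · intro j _
      rw [Finset.inter_comm (P j) W₂, Finset.inter_comm (P j) W₁]; exact hle j
    · refine ⟨i, Finset.mem_univ i, ?_⟩
      rw [Finset.inter_comm (P i) W₂, Finset.inter_comm (P i) W₁]; exact hi
  omega

/-- The exponential mechanism with AV score (probability proportional to
e^{AV_P(W)·ε/(2k)} over size-k committees) satisfies ε-DP and e^{ε/(2k)}-Pareto
efficiency. -/
theorem expMechanism_AV (f : ABCRule A n) (ε : ℝ) (hε : 0 < ε)
    (hf : ∀ (P : Profile A n) (k : ℕ) (W : Finset A), W.card = k →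
      f.prob P k W =
        Real.exp ((AV P W : ℝ) * ε / (2 * k)) /
          ∑ W' ∈ Finset.univ.filter (fun W' : Finset A => W'.card = k),
            Real.exp ((AV P W' : ℝ) * ε / (2 * k))) :
    DP f ε ∧ ∀ k : ℕ, 0 < k → BetaPEAt f k (Real.exp (ε / (2 * k))) := by
  constructor
  · -- DP
    intro k P P' W hN
    by_cases hW : W.card = k
    · have key : ∀ (Q Q' : Profile A n), Neighboring Q Q' → ∀ V : Finset A, V.card = k →
          (AV Q V : ℝ) * ε / (2 * k) ≤ ε / 2 + (AV Q' V : ℝ) * ε / (2 * k) := by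
        intro Q Q' hQ V hV
        rcases Nat.eq_zero_or_pos k with hk | hk
        · simp [hk]; positivity
        · have hk' : (0:ℝ) < 2 * k := by positivity
          have hAV : (AV Q V : ℝ) ≤ (AV Q' V : ℝ) + k := by
            have := AV_neighbor_le hQ V
            rw [hV] at this
            exact_mod_cast this
          rw [div_add_div _ _ (by norm_num : (2:ℝ) ≠ 0) (ne_of_gt hk'),
            div_le_div_iff₀ hk' (by positivity)]
          nlinarith [mul_le_mul_of_nonneg_right hAV hε.le, hk'.le]
      have hN' : Neighboring P' P := by
        obtain ⟨i, hi⟩ := hN; exact ⟨i, fun j hj => (hi j hj).symm⟩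
      have hS : 0 < ∑ W' ∈ Finset.univ.filter (fun W' : Finset A => W'.card = k),
          Real.exp ((AV P W' : ℝ) * ε / (2 * k)) :=
        Finset.sum_pos (fun _ _ => Real.exp_pos _)
          ⟨W, Finset.mem_filter.mpr ⟨Finset.mem_univ W, hW⟩⟩
      have hS' : 0 < ∑ W' ∈ Finset.univ.filter (fun W' : Finset A => W'.card = k),
          Real.exp ((AV P' W' : ℝ) * ε / (2 * k)) :=
        Finset.sum_pos (fun _ _ => Real.exp_pos _)
          ⟨W, Finset.mem_filter.mpr ⟨Finset.mem_univ W, hW⟩⟩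
      rw [hf P k W hW, hf P' k W hW, mul_div_assoc', div_le_div_iff₀ hS hS']
      have hnum : Real.exp ((AV P W : ℝ) * ε / (2 * k)) ≤
          Real.exp (ε / 2) * Real.exp ((AV P' W : ℝ) * ε / (2 * k)) := by
        rw [← Real.exp_add]
        exact Real.exp_le_exp.mpr (key P P' hN W hW)
      have hsum : ∑ W' ∈ Finset.univ.filter (fun W' : Finset A => W'.card = k),
          Real.exp ((AV P' W' : ℝ) * ε / (2 * k)) ≤
          Real.exp (ε / 2) * ∑ W' ∈ Finset.univ.filter (fun W' : Finset A => W'.card = k),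
          Real.exp ((AV P W' : ℝ) * ε / (2 * k)) := by
        rw [Finset.mul_sum]
        apply Finset.sum_le_sum
        intro V hV
        rw [← Real.exp_add]
        exact Real.exp_le_exp.mpr (key P' P hN' V (Finset.mem_filter.mp hV).2)
      calc Real.exp ((AV P W : ℝ) * ε / (2 * k)) *
            ∑ W' ∈ Finset.univ.filter (fun W' : Finset A => W'.card = k),
              Real.exp ((AV P' W' : ℝ) * ε / (2 * k))
          ≤ (Real.exp (ε / 2) * Real.exp ((AV P' W : ℝ) * ε / (2 * k))) *
            (Real.exp (ε / 2) * ∑ W' ∈ Finset.univ.filter (fun W' : Finset A => W'.card = k),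
              Real.exp ((AV P W' : ℝ) * ε / (2 * k))) :=
            mul_le_mul hnum hsum hS'.le (by positivity)
        _ = Real.exp ε * Real.exp ((AV P' W : ℝ) * ε / (2 * k)) *
              ∑ W' ∈ Finset.univ.filter (fun W' : Finset A => W'.card = k),
              Real.exp ((AV P W' : ℝ) * ε / (2 * k)) := by
            rw [show Real.exp ε = Real.exp (ε/2) * Real.exp (ε/2) by
              rw [← Real.exp_add]; ring_nf]
            ring
    · have h0 : f.prob P k W = 0 := by
        by_contra h; exact hW (f.size_eq P k W h)
      rw [h0]
      have := f.nonneg P' k W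
      positivity
  · -- Pareto efficiency
    intro k hk P W₁ W₂ h₁ h₂ hdom
    have hS : 0 < ∑ W' ∈ Finset.univ.filter (fun W' : Finset A => W'.card = k),
        Real.exp ((AV P W' : ℝ) * ε / (2 * k)) :=
      Finset.sum_pos (fun _ _ => Real.exp_pos _)
        ⟨W₁, Finset.mem_filter.mpr ⟨Finset.mem_univ W₁, h₁⟩⟩
    rw [hf P k W₁ h₁, hf P k W₂ h₂, mul_div_assoc', div_le_div_iff₀ hS hS]
    apply mul_le_mul_of_nonneg_right _ hS.le
    rw [← Real.exp_add]
    apply Real.exp_le_exp.mpr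
    have hAV : (AV P W₂ : ℝ) + 1 ≤ (AV P W₁ : ℝ) := by
      exact_mod_cast AV_paretoDom hdom
    have hk' : (0:ℝ) < 2 * k := by positivity
    rw [← add_div, div_le_div_iff₀ hk' hk']
    nlinarith [mul_le_mul_of_nonneg_right hAV hε.le]
end
end

section
/- The randomized-response Condorcet mechanism — which, when a Condorcet committee W_c exists for (P,k), outputs W_c with probability e^ε/(e^ε + C(m,k) − 1) and each other size-k committee with probability 1/(e^ε + C(m,k) − 1), and otherwise outputs a uniformly random size-k committee — satisfies ε-DP and the e^ε-Condorcet criterion. -/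
open scoped Classical

noncomputable section

variable {A : Type} [Fintype A] [DecidableEq A] {n : ℕ}

/-!
Whatever the profile, every size-`k` committee receives a probability in the interval
`[1 / D, e^ε / D]` with `D = e^ε + C(m,k) - 1`: under a Condorcet committee this is the
mechanism's definition, and the uniform value `1 / C(m,k)` lies there because
`(e^ε - 1)(C(m,k) - 1) ≥ 0`. Two numbers in an interval `[L, e^ε L]` are within a factor
`e^ε` of each other, which is differential privacy.
-/

open Real

theorem ABCRule.dpAt_of_forall_mem_Icc (f : ABCRule A n) {k : ℕ} {ε L : ℝ}
    (h : ∀ P W, W.card = k → f.prob P k W ∈ Set.Icc L (exp ε * L)) : DPAt f k ε := by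
  intro P P' W _
  by_cases hW : W.card = k
  · calc f.prob P k W ≤ exp ε * L := (h P W hW).2
      _ ≤ exp ε * f.prob P' k W := by gcongr; exact (h P' W hW).1
  · rw [not_not.mp (mt (f.size_eq P k W) hW)]
    exact mul_nonneg (exp_pos ε).le (f.nonneg P' k W)

theorem ite_div_mem_Icc_one_div {e D : ℝ} (p : Prop) [Decidable p] (he : 1 ≤ e) (hD : 0 ≤ D) :
    (if p then e else 1) / D ∈ Set.Icc (1 / D) (e * (1 / D)) := by
  rw [mul_one_div]
  constructor <;> split_ifs <;> gcongr

theorem inv_mem_Icc_one_div_add_sub_one {e C : ℝ} (he : 1 ≤ e) (hC : 1 ≤ C) :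
    C⁻¹ ∈ Set.Icc (1 / (e + C - 1)) (e * (1 / (e + C - 1))) := by
  have hD : 0 < e + C - 1 := by linarith
  rw [mul_one_div, inv_eq_one_div]
  constructor
  · gcongr; linarith
  · rw [div_le_div_iff₀ (by linarith) hD]
    nlinarith [mul_nonneg (sub_nonneg.mpr he) (sub_nonneg.mpr hC)]

/-- The randomized-response Condorcet mechanism (W_c gets probability
e^ε/(e^ε + C(m,k) − 1), every other size-k committee 1/(e^ε + C(m,k) − 1); uniform
when no Condorcet committee exists) satisfies ε-DP and the e^ε-Condorcet criterion. -/
theorem randomizedResponse_condorcet (f : ABCRule A n) (ε : ℝ) (hε : 0 < ε)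
    (hf₁ : ∀ (P : Profile A n) (k : ℕ) (Wc W : Finset A),
      CondorcetCommittee P k Wc → W.card = k →
        f.prob P k W =
          (if W = Wc then Real.exp ε else 1) /
            (Real.exp ε + (Nat.choose (Fintype.card A) k : ℝ) - 1))
    (hf₂ : ∀ (P : Profile A n) (k : ℕ) (W : Finset A), W.card = k →
      (¬ ∃ Wc : Finset A, CondorcetCommittee P k Wc) →
        f.prob P k W = ((Nat.choose (Fintype.card A) k : ℝ))⁻¹) :
    DP f ε ∧ EtaCC f (Real.exp ε) := by
  have he : 1 ≤ exp ε := one_le_exp hε.le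
  refine ⟨fun k => f.dpAt_of_forall_mem_Icc
      (L := 1 / (exp ε + (Fintype.card A).choose k - 1)) fun P W hW => ?_,
    fun P k Wc W hWc hW hne => ?_⟩
  · have hC : (1 : ℝ) ≤ (Fintype.card A).choose k := by
      exact_mod_cast Nat.choose_pos (hW ▸ W.card_le_univ)
    by_cases hP : ∃ Wc, CondorcetCommittee P k Wc
    · obtain ⟨Wc, hWc⟩ := hP
      rw [hf₁ P k Wc W hWc hW]
      exact ite_div_mem_Icc_one_div _ he (by linarith)
    · rw [hf₂ P k W hW hP]
      exact inv_mem_Icc_one_div_add_sub_one he hC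
  · rw [hf₁ P k Wc Wc hWc hWc.1, hf₁ P k Wc W hWc hW, if_pos rfl, if_neg hne, mul_one_div]
end
end

section
/- For any ε > 0, if a randomized approval-based committee rule f satisfies ε-DP, η-Condorcet criterion, and θ-JR, then η·θ ≤ 1, provided there exists a voting instance (P,k) whose Condorcet committee does not satisfy JR and whose JR set is nonempty (e.g., k ≥ 3, n odd, m ≥ 2k). -/
open scoped Classical

noncomputable section

variable {A : Type} [Fintype A] [DecidableEq A] {n : ℕ}

/-! Let `Wc` be the Condorcet committee violating JR and `W₀` a JR committee. θ-JR gives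
`θ·p(Wc) ≤ p(W₀)` and η-CC gives `η·p(W₀) ≤ p(Wc)`, so `ηθ·p(Wc) ≤ p(Wc)`. Finally `p(Wc) > 0`:
some committee has positive probability, and η-CC makes `Wc` at least `η` times as likely. -/

theorem ABCRule.exists_prob_pos (f : ABCRule A n) (P : Profile A n) {k : ℕ}
    (hk : k ≤ Fintype.card A) : ∃ W : Finset A, W.card = k ∧ 0 < f.prob P k W := by
  by_contra! h
  have hzero : ∀ W ∈ Finset.univ.filter (fun W : Finset A => W.card = k), f.prob P k W = 0 :=
    fun W hW => le_antisymm (h W (Finset.mem_filter.mp hW).2) (f.nonneg P k W)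
  have hsum := f.sum_one P k hk
  rw [Finset.sum_eq_zero hzero] at hsum
  exact zero_ne_one hsum

theorem EtaCC.prob_condorcet_pos {f : ABCRule A n} {η : ℝ} (hCC : EtaCC f η) (hη : 0 < η)
    {P : Profile A n} {k : ℕ} {Wc : Finset A} (hWc : CondorcetCommittee P k Wc) :
    0 < f.prob P k Wc := by
  obtain ⟨W, hWk, hW⟩ := f.exists_prob_pos P (hWc.1 ▸ Finset.card_le_univ Wc)
  by_cases hWWc : W = Wc
  · exact hWWc ▸ hW
  · exact (mul_pos hη hW).trans_le (hCC P k Wc W hWc hWk hWWc)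

theorem etaCC_thetaJR_tradeoff_general (f : ABCRule A n) (η θ : ℝ)
    (hη : 0 < η)
    (hCC : EtaCC f η) (hJR : ThetaJR f θ)
    (hw : ∃ (P : Profile A n) (k : ℕ) (Wc : Finset A),
      CondorcetCommittee P k Wc ∧ ¬ JRsat P k Wc ∧ ∃ W₀ : Finset A, JRsat P k W₀) :
    η * θ ≤ 1 := by
  obtain ⟨P, k, Wc, hWc, hWcJR, W₀, hW₀⟩ := hw
  have hne : W₀ ≠ Wc := fun h => hWcJR (h ▸ hW₀)
  refine le_of_mul_le_mul_right ?_ (hCC.prob_condorcet_pos hη hWc)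
  calc η * θ * f.prob P k Wc = η * (θ * f.prob P k Wc) := mul_assoc _ _ _
    _ ≤ η * f.prob P k W₀ := mul_le_mul_of_nonneg_left (hJR P k W₀ Wc hW₀ hWc.1 hWcJR) hη.le
    _ ≤ f.prob P k Wc := hCC P k Wc W₀ hWc hW₀.1 hne
    _ = 1 * f.prob P k Wc := (one_mul _).symm

/-- If an ABC rule satisfies ε-DP, the η-Condorcet criterion, and θ-JR
(η, θ > 0), and there is an instance whose Condorcet committee violates JR while some
committee satisfies JR, then η·θ ≤ 1. -/
theorem etaCC_thetaJR_tradeoff (f : ABCRule A n) (ε η θ : ℝ) (hε : 0 < ε)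
    (hη : 0 < η) (hθ : 0 < θ)
    (hDP : DP f ε) (hCC : EtaCC f η) (hJR : ThetaJR f θ)
    (hw : ∃ (P : Profile A n) (k : ℕ) (Wc : Finset A),
      CondorcetCommittee P k Wc ∧ ¬ JRsat P k Wc ∧ ∃ W₀ : Finset A, JRsat P k W₀) :
    η * θ ≤ 1 :=
  etaCC_thetaJR_tradeoff_general f η θ hη hCC hJR hw
end
end
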